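/- Let Q(X) = max_{γ∈U} q(γ,X), where each q(γ,·) is a quadratic with μI ⪯ A(γ) ⪯ LI for γ ∈ U. Let Ξ ∈ ℝ^{p×k}, define Q_L(Ξ;X) = max_{γ∈U}(q(γ,Ξ) + ⟨∇₂q(γ,Ξ), X−Ξ⟩) + (L/2)‖X−Ξ‖_F², let Q_L*(Ξ) = min_X Q_L(Ξ;X), and suppose X̃ satisfies Q_L(Ξ;X̃) ≤ Q_L*(Ξ) + ε. Set L̃ = L−μ/2, μ̃ = μ/2, κ = L/μ, and g̃ = L̃(Ξ−X̃). Then for all X: Q(X) ≥ Q(X̃) + (1/(2L̃))‖g̃‖_F² + ⟨g̃, X−Ξ⟩ + (μ̃/2)‖X−Ξ‖_F² − 2κε. -/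

import Mathlib

open Matrix

noncomputable def frobSq {p k : ℕ} (X : Matrix (Fin p) (Fin k) ℝ) : ℝ :=
  Matrix.trace (Xᵀ * X)

noncomputable def minner {p k : ℕ} (A B : Matrix (Fin p) (Fin k) ℝ) : ℝ :=
  Matrix.trace (Aᵀ * B)

noncomputable def Aaff {p m : ℕ} (A0 : Matrix (Fin p) (Fin p) ℝ)
    (Ai : Fin m → Matrix (Fin p) (Fin p) ℝ) (γ : Fin m → ℝ) :
    Matrix (Fin p) (Fin p) ℝ :=
  A0 + ∑ i, γ i • Ai i

noncomputable def Baff {p k m : ℕ} (B0 : Matrix (Fin p) (Fin k) ℝ)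
    (Bi : Fin m → Matrix (Fin p) (Fin k) ℝ) (γ : Fin m → ℝ) :
    Matrix (Fin p) (Fin k) ℝ :=
  B0 + ∑ i, γ i • Bi i

noncomputable def caff {m : ℕ} (c0 : ℝ) (ci : Fin m → ℝ) (γ : Fin m → ℝ) : ℝ :=
  c0 + ∑ i, γ i * ci i

/-- `q(γ, X) = (1/2) tr(Xᵀ A(γ) X) + ⟨B(γ), X⟩ + c(γ)`. -/
noncomputable def qfun {p k m : ℕ} (A0 : Matrix (Fin p) (Fin p) ℝ)
    (Ai : Fin m → Matrix (Fin p) (Fin p) ℝ) (B0 : Matrix (Fin p) (Fin k) ℝ)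
    (Bi : Fin m → Matrix (Fin p) (Fin k) ℝ) (c0 : ℝ) (ci : Fin m → ℝ)
    (γ : Fin m → ℝ) (X : Matrix (Fin p) (Fin k) ℝ) : ℝ :=
  1 / 2 * Matrix.trace (Xᵀ * Aaff A0 Ai γ * X) + minner (Baff B0 Bi γ) X + caff c0 ci γ

/-! Let `Q̂(X) = max_γ (q(γ,Ξ) + ⟨∇₂q(γ,Ξ), X - Ξ⟩)` be the linearized max, so that
`Q_L = Q̂ + (L/2)‖· - Ξ‖²`. As a maximum of affine functions `Q̂` is convex, and the curvature
bounds `μI ⪯ A(γ) ⪯ LI` sandwich `Q̂ + (μ/2)‖· - Ξ‖² ≤ Q ≤ Q̂ + (L/2)‖· - Ξ‖²`. Testing the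
`ε`-optimality of `X̃` against `(1 - t)X̃ + tX` and using convexity of `Q̂` bounds `Q̂(X) - Q̂(X̃)`
from below up to an error `ε/t`; with `t = μ/(2L)` this error is `2κε`, and the two sandwich
inequalities turn the bound into the claim. -/

open Set RealInnerProductSpace

section

variable {E : Type*} [NormedAddCommGroup E] [InnerProductSpace ℝ E]

theorem neg_sq_div_le_inner_add_sq {L : ℝ} (hL : 0 < L) (g d : E) :
    -(‖g‖ ^ 2 / (2 * L)) ≤ ⟪g, d⟫ + L / 2 * ‖d‖ ^ 2 := by
  have hcs : -(‖g‖ * ‖d‖) ≤ ⟪g, d⟫ := neg_le_of_abs_le (abs_real_inner_le_norm g d)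
  have : 0 ≤ (‖g‖ - L * ‖d‖) ^ 2 / (2 * L) := by positivity
  have e : (‖g‖ - L * ‖d‖) ^ 2 / (2 * L) = ‖g‖ ^ 2 / (2 * L) - ‖g‖ * ‖d‖ + L / 2 * ‖d‖ ^ 2 := by
    field_simp; ring
  linarith

theorem approx_prox_le {φ Q : E → ℝ} (hφ : ConvexOn ℝ univ φ) {μ L ε : ℝ} (hμ : 0 < μ)
    (hμL : μ ≤ L) {ξ xt : E} (hlow : ∀ y, φ y + μ / 2 * ‖y - ξ‖ ^ 2 ≤ Q y)
    (hup : Q xt ≤ φ xt + L / 2 * ‖xt - ξ‖ ^ 2)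
    (hopt : ∀ y, φ xt + L / 2 * ‖xt - ξ‖ ^ 2 ≤ φ y + L / 2 * ‖y - ξ‖ ^ 2 + ε) (x : E) :
    Q xt + 1 / (2 * (L - μ / 2)) * ‖(L - μ / 2) • (ξ - xt)‖ ^ 2 +
        ⟪(L - μ / 2) • (ξ - xt), x - ξ⟫ + μ / 2 / 2 * ‖x - ξ‖ ^ 2 - 2 * (L / μ) * ε ≤ Q x := by
  have hL : 0 < L := hμ.trans_le hμL
  set t := μ / (2 * L) with ht
  have ht0 : 0 < t := by positivity
  have ht1 : t ≤ 1 := by rw [ht, div_le_one (by positivity)]; linarith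
  set a := ‖xt - ξ‖ ^ 2
  set b := ‖x - ξ‖ ^ 2
  set m := ⟪xt - ξ, x - ξ⟫
  have hconv : φ ((1 - t) • xt + t • x) ≤ (1 - t) * φ xt + t * φ x :=
    hφ.2 trivial trivial (by linarith) ht0.le (by ring)
  have hdist :
      ‖(1 - t) • xt + t • x - ξ‖ ^ 2 = (1 - t) ^ 2 * a + 2 * ((1 - t) * t) * m + t ^ 2 * b := by
    rw [show (1 - t) • xt + t • x - ξ = (1 - t) • (xt - ξ) + t • (x - ξ) by module,
      norm_add_sq_real, norm_smul, norm_smul, real_inner_smul_left, real_inner_smul_right,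
      Real.norm_of_nonneg (by linarith), Real.norm_of_nonneg ht0.le]
    ring
  have hdescent : t * ((L - μ / 4) * a - (L - μ / 2) * m - μ / 4 * b - 2 * (L / μ) * ε) ≤
      t * (φ x - φ xt) := by
    have h := hopt ((1 - t) • xt + t • x)
    rw [hdist] at h
    have e : t * ((L - μ / 4) * a - (L - μ / 2) * m - μ / 4 * b - 2 * (L / μ) * ε) =
        L / 2 * a - L / 2 * ((1 - t) ^ 2 * a + 2 * ((1 - t) * t) * m + t ^ 2 * b) - ε := by
      rw [ht]; field_simp; ring
    rw [e]; nlinarith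
  have hgrad : ‖(L - μ / 2) • (ξ - xt)‖ ^ 2 = (L - μ / 2) ^ 2 * a := by
    rw [norm_smul, mul_pow, Real.norm_eq_abs, sq_abs, norm_sub_rev]
  have hinner : ⟪(L - μ / 2) • (ξ - xt), x - ξ⟫ = -((L - μ / 2) * m) := by
    rw [real_inner_smul_left, ← neg_sub xt ξ, inner_neg_left]; ring
  have hcoef : 1 / (2 * (L - μ / 2)) * ((L - μ / 2) ^ 2 * a) = (L - μ / 2) / 2 * a := by
    have : L - μ / 2 ≠ 0 := by linarith
    field_simp
  rw [hgrad, hinner, hcoef]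
  linarith [le_of_mul_le_mul_left hdescent ht0, hlow x]

end

noncomputable def Matrix.toEuclideanVec {m n : Type*} :
    Matrix m n ℝ ≃ₗ[ℝ] EuclideanSpace ℝ (m × n) :=
  (LinearEquiv.curry ℝ ℝ m n).symm.trans (WithLp.linearEquiv 2 ℝ (m × n → ℝ)).symm

@[simp]
theorem Matrix.toEuclideanVec_apply {m n : Type*} (A : Matrix m n ℝ)
    (ij : m × n) : A.toEuclideanVec ij = A ij.1 ij.2 :=
  rfl

theorem minner_eq_inner {p k : ℕ} (A B : Matrix (Fin p) (Fin k) ℝ) :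
    minner A B = ⟪A.toEuclideanVec, B.toEuclideanVec⟫ := by
  simp only [minner, PiLp.inner_apply, Matrix.toEuclideanVec_apply, Fintype.sum_prod_type,
    Matrix.trace, Matrix.diag, Matrix.mul_apply, Matrix.transpose_apply, Real.inner_apply]
  exact Finset.sum_comm

theorem frobSq_eq_norm_sq {p k : ℕ} (A : Matrix (Fin p) (Fin k) ℝ) :
    frobSq A = ‖A.toEuclideanVec‖ ^ 2 := by
  rw [← real_inner_self_eq_norm_sq, ← minner_eq_inner]; rfl

theorem neg_frobSq_div_le_minner_add {p k : ℕ} {L : ℝ} (hL : 0 < L)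
    (G D : Matrix (Fin p) (Fin k) ℝ) :
    -(frobSq G / (2 * L)) ≤ minner G D + L / 2 * frobSq D := by
  simpa only [minner_eq_inner, frobSq_eq_norm_sq] using neg_sq_div_le_inner_add_sq hL _ _

theorem approx_prox_le_matrix {p k : ℕ} {φ Q : Matrix (Fin p) (Fin k) ℝ → ℝ}
    (hφ : ConvexOn ℝ univ φ) {μ L ε : ℝ} (hμ : 0 < μ) (hμL : μ ≤ L)
    {Ξ Xt : Matrix (Fin p) (Fin k) ℝ}
    (hlow : ∀ Y, φ Y + μ / 2 * frobSq (Y - Ξ) ≤ Q Y)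
    (hup : Q Xt ≤ φ Xt + L / 2 * frobSq (Xt - Ξ))
    (hopt : ∀ Y, φ Xt + L / 2 * frobSq (Xt - Ξ) ≤ φ Y + L / 2 * frobSq (Y - Ξ) + ε)
    (X : Matrix (Fin p) (Fin k) ℝ) :
    Q Xt + 1 / (2 * (L - μ / 2)) * frobSq ((L - μ / 2) • (Ξ - Xt)) +
        minner ((L - μ / 2) • (Ξ - Xt)) (X - Ξ) + μ / 2 / 2 * frobSq (X - Ξ) -
        2 * (L / μ) * ε ≤ Q X := by
  let e : Matrix (Fin p) (Fin k) ℝ ≃ₗ[ℝ] EuclideanSpace ℝ (Fin p × Fin k) :=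
    Matrix.toEuclideanVec
  have h := approx_prox_le (φ := φ ∘ e.symm) (Q := Q ∘ e.symm) (ξ := e Ξ) (xt := e Xt)
    (by simpa using hφ.comp_linearMap e.symm.toLinearMap) hμ hμL
    (fun y => by simpa [frobSq_eq_norm_sq, e] using hlow (e.symm y))
    (by simpa [frobSq_eq_norm_sq, e] using hup)
    (fun y => by simpa [frobSq_eq_norm_sq, e] using hopt (e.symm y)) (e X)
  simpa [frobSq_eq_norm_sq, minner_eq_inner, e] using h

theorem Matrix.PosSemidef.trace_transpose_mul_mul_nonneg {n m : Type*} [Fintype n] [Fintype m]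
    {M : Matrix n n ℝ} (hM : M.PosSemidef) (D : Matrix n m ℝ) : 0 ≤ (Dᵀ * M * D).trace := by
  simpa using (hM.conjTranspose_mul_mul_same D).trace_nonneg

theorem mul_frobSq_le_trace {p k : ℕ} {M : Matrix (Fin p) (Fin p) ℝ} {c : ℝ}
    (h : (M - c • (1 : Matrix (Fin p) (Fin p) ℝ)).PosSemidef) (D : Matrix (Fin p) (Fin k) ℝ) :
    c * frobSq D ≤ (Dᵀ * M * D).trace := by
  have := h.trace_transpose_mul_mul_nonneg D
  simp only [Matrix.mul_sub, Matrix.sub_mul, Matrix.mul_smul, Matrix.smul_mul, Matrix.mul_one,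
    Matrix.trace_sub, Matrix.trace_smul, smul_eq_mul] at this
  unfold frobSq; linarith

theorem trace_le_mul_frobSq {p k : ℕ} {M : Matrix (Fin p) (Fin p) ℝ} {c : ℝ}
    (h : (c • (1 : Matrix (Fin p) (Fin p) ℝ) - M).PosSemidef) (D : Matrix (Fin p) (Fin k) ℝ) :
    (Dᵀ * M * D).trace ≤ c * frobSq D := by
  have := h.trace_transpose_mul_mul_nonneg D
  simp only [Matrix.mul_sub, Matrix.sub_mul, Matrix.mul_smul, Matrix.smul_mul, Matrix.mul_one,
    Matrix.trace_sub, Matrix.trace_smul, smul_eq_mul] at this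
  unfold frobSq; linarith

theorem csSup_image_le_csSup_image_add {ι : Type*} {U : Set ι} (hU : U.Nonempty) {f g : ι → ℝ}
    (hg : BddAbove (g '' U)) {c : ℝ} (h : ∀ i ∈ U, f i ≤ g i + c) :
    sSup (f '' U) ≤ sSup (g '' U) + c := by
  refine csSup_le (hU.image f) ?_
  rintro _ ⟨i, hi, rfl⟩
  exact (h i hi).trans (by gcongr; exact le_csSup hg (mem_image_of_mem g hi))

theorem convexOn_csSup_image {ι E : Type*} [AddCommGroup E] [Module ℝ E] {U : Set ι}
    (hU : U.Nonempty) {f : ι → E → ℝ} (hf : ∀ i ∈ U, ConvexOn ℝ univ (f i))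
    (hbdd : ∀ x, BddAbove ((f · x) '' U)) : ConvexOn ℝ univ fun x => sSup ((f · x) '' U) := by
  refine ⟨convex_univ, fun x _ y _ a b ha hb hab => csSup_le (hU.image _) ?_⟩
  rintro _ ⟨i, hi, rfl⟩
  refine ((hf i hi).2 trivial trivial ha hb hab).trans ?_
  simp only [smul_eq_mul]
  gcongr
  · exact le_csSup (hbdd x) (mem_image_of_mem _ hi)
  · exact le_csSup (hbdd y) (mem_image_of_mem _ hi)

section QuadraticFamily

variable {p k m : ℕ} (A0 : Matrix (Fin p) (Fin p) ℝ) (Ai : Fin m → Matrix (Fin p) (Fin p) ℝ)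
  (B0 : Matrix (Fin p) (Fin k) ℝ) (Bi : Fin m → Matrix (Fin p) (Fin k) ℝ) (c0 : ℝ) (ci : Fin m → ℝ)

noncomputable def qlin (Ξ : Matrix (Fin p) (Fin k) ℝ) (γ : Fin m → ℝ)
    (X : Matrix (Fin p) (Fin k) ℝ) : ℝ :=
  qfun A0 Ai B0 Bi c0 ci γ Ξ + minner (Aaff A0 Ai γ * Ξ + Baff B0 Bi γ) (X - Ξ)

theorem continuous_qfun (X : Matrix (Fin p) (Fin k) ℝ) :
    Continuous fun γ => qfun A0 Ai B0 Bi c0 ci γ X := by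
  unfold qfun Aaff Baff caff minner; fun_prop

theorem continuous_qlin (Ξ X : Matrix (Fin p) (Fin k) ℝ) :
    Continuous fun γ => qlin A0 Ai B0 Bi c0 ci Ξ γ X := by
  unfold qlin qfun Aaff Baff caff minner; fun_prop

theorem Aaff_transpose (hA0 : A0ᵀ = A0) (hAi : ∀ i, (Ai i)ᵀ = Ai i) (γ : Fin m → ℝ) :
    (Aaff A0 Ai γ)ᵀ = Aaff A0 Ai γ := by
  simp [Aaff, Matrix.transpose_sum, hA0, hAi]

theorem qfun_eq_qlin_add {γ : Fin m → ℝ} (hA : (Aaff A0 Ai γ)ᵀ = Aaff A0 Ai γ)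
    (Ξ X : Matrix (Fin p) (Fin k) ℝ) :
    qfun A0 Ai B0 Bi c0 ci γ X =
      qlin A0 Ai B0 Bi c0 ci Ξ γ X + 1 / 2 * ((X - Ξ)ᵀ * Aaff A0 Ai γ * (X - Ξ)).trace := by
  have hcross : (Xᵀ * Aaff A0 Ai γ * Ξ).trace = (Ξᵀ * Aaff A0 Ai γ * X).trace := by
    rw [← Matrix.trace_transpose (Xᵀ * _ * Ξ)]
    simp [Matrix.transpose_mul, hA, Matrix.mul_assoc]
  simp only [qfun, qlin, minner, Matrix.transpose_sub, Matrix.transpose_add,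
    Matrix.transpose_mul, hA, Matrix.sub_mul, Matrix.mul_sub, Matrix.add_mul, Matrix.trace_sub,
    Matrix.trace_add, Matrix.mul_assoc] at hcross ⊢
  linarith

theorem qlin_add_le_qfun {γ : Fin m → ℝ} (hA : (Aaff A0 Ai γ)ᵀ = Aaff A0 Ai γ) {μ : ℝ}
    (hμ : (Aaff A0 Ai γ - μ • (1 : Matrix (Fin p) (Fin p) ℝ)).PosSemidef)
    (Ξ X : Matrix (Fin p) (Fin k) ℝ) :
    qlin A0 Ai B0 Bi c0 ci Ξ γ X + μ / 2 * frobSq (X - Ξ) ≤ qfun A0 Ai B0 Bi c0 ci γ X := by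
  rw [qfun_eq_qlin_add A0 Ai B0 Bi c0 ci hA Ξ]
  linarith [mul_frobSq_le_trace hμ (X - Ξ)]

theorem qfun_le_qlin_add {γ : Fin m → ℝ} (hA : (Aaff A0 Ai γ)ᵀ = Aaff A0 Ai γ) {L : ℝ}
    (hL : (L • (1 : Matrix (Fin p) (Fin p) ℝ) - Aaff A0 Ai γ).PosSemidef)
    (Ξ X : Matrix (Fin p) (Fin k) ℝ) :
    qfun A0 Ai B0 Bi c0 ci γ X ≤ qlin A0 Ai B0 Bi c0 ci Ξ γ X + L / 2 * frobSq (X - Ξ) := by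
  rw [qfun_eq_qlin_add A0 Ai B0 Bi c0 ci hA Ξ]
  linarith [trace_le_mul_frobSq hL (X - Ξ)]

theorem convexOn_qlin (Ξ : Matrix (Fin p) (Fin k) ℝ) (γ : Fin m → ℝ) :
    ConvexOn ℝ univ (qlin A0 Ai B0 Bi c0 ci Ξ γ) := by
  refine ⟨convex_univ, fun X _ Y _ a b _ _ hab => le_of_eq ?_⟩
  have hshift : a • X + b • Y - Ξ = a • (X - Ξ) + b • (Y - Ξ) := by
    calc a • X + b • Y - Ξ = a • X + b • Y - (a + b) • Ξ := by rw [hab, one_smul]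
      _ = a • (X - Ξ) + b • (Y - Ξ) := by module
  simp only [qlin, hshift, minner_eq_inner, map_add, map_smul, inner_add_right, inner_smul_right,
    smul_eq_mul]
  linear_combination -qfun A0 Ai B0 Bi c0 ci γ Ξ * hab

end QuadraticFamily

section LinearizedMax

variable {p k m : ℕ} (U : Set (Fin m → ℝ)) (A0 : Matrix (Fin p) (Fin p) ℝ)
  (Ai : Fin m → Matrix (Fin p) (Fin p) ℝ) (B0 : Matrix (Fin p) (Fin k) ℝ)
  (Bi : Fin m → Matrix (Fin p) (Fin k) ℝ) (c0 : ℝ) (ci : Fin m → ℝ)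

noncomputable def qlinMax (Ξ X : Matrix (Fin p) (Fin k) ℝ) : ℝ :=
  sSup ((fun γ => qlin A0 Ai B0 Bi c0 ci Ξ γ X) '' U)

theorem convexOn_qlinMax (hU : IsCompact U) (hUne : U.Nonempty)
    (Ξ : Matrix (Fin p) (Fin k) ℝ) :
    ConvexOn ℝ univ (qlinMax U A0 Ai B0 Bi c0 ci Ξ) :=
  convexOn_csSup_image hUne (fun γ _ => convexOn_qlin A0 Ai B0 Bi c0 ci Ξ γ)
    fun X => hU.bddAbove_image (continuous_qlin A0 Ai B0 Bi c0 ci Ξ X).continuousOn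

theorem qlinMax_add_le_sSup (hU : IsCompact U) (hUne : U.Nonempty) (hA0 : A0ᵀ = A0)
    (hAi : ∀ i, (Ai i)ᵀ = Ai i) {μ : ℝ}
    (hμ : ∀ γ ∈ U, (Aaff A0 Ai γ - μ • (1 : Matrix (Fin p) (Fin p) ℝ)).PosSemidef)
    (Ξ X : Matrix (Fin p) (Fin k) ℝ) :
    qlinMax U A0 Ai B0 Bi c0 ci Ξ X + μ / 2 * frobSq (X - Ξ) ≤
      sSup ((fun γ => qfun A0 Ai B0 Bi c0 ci γ X) '' U) := by
  have := csSup_image_le_csSup_image_add hUne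
    (hU.bddAbove_image (continuous_qfun A0 Ai B0 Bi c0 ci X).continuousOn)
    (f := fun γ => qlin A0 Ai B0 Bi c0 ci Ξ γ X) (c := -(μ / 2 * frobSq (X - Ξ))) fun γ hγ => by
      linarith [qlin_add_le_qfun A0 Ai B0 Bi c0 ci (Aaff_transpose A0 Ai hA0 hAi γ) (hμ γ hγ) Ξ X]
  unfold qlinMax
  linarith

theorem sSup_le_qlinMax_add (hU : IsCompact U) (hUne : U.Nonempty) (hA0 : A0ᵀ = A0)
    (hAi : ∀ i, (Ai i)ᵀ = Ai i) {L : ℝ}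
    (hL : ∀ γ ∈ U, (L • (1 : Matrix (Fin p) (Fin p) ℝ) - Aaff A0 Ai γ).PosSemidef)
    (Ξ X : Matrix (Fin p) (Fin k) ℝ) :
    sSup ((fun γ => qfun A0 Ai B0 Bi c0 ci γ X) '' U) ≤
      qlinMax U A0 Ai B0 Bi c0 ci Ξ X + L / 2 * frobSq (X - Ξ) :=
  csSup_image_le_csSup_image_add hUne
    (hU.bddAbove_image (continuous_qlin A0 Ai B0 Bi c0 ci Ξ X).continuousOn) fun γ hγ =>
      qfun_le_qlin_add A0 Ai B0 Bi c0 ci (Aaff_transpose A0 Ai hA0 hAi γ) (hL γ hγ) Ξ X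

theorem bddBelow_range_qlinMax_add (hU : IsCompact U) (hUne : U.Nonempty) {L : ℝ} (hL : 0 < L)
    (Ξ : Matrix (Fin p) (Fin k) ℝ) :
    BddBelow (range fun X => qlinMax U A0 Ai B0 Bi c0 ci Ξ X + L / 2 * frobSq (X - Ξ)) := by
  obtain ⟨γ, hγ⟩ := hUne
  set G := Aaff A0 Ai γ * Ξ + Baff B0 Bi γ
  refine ⟨qfun A0 Ai B0 Bi c0 ci γ Ξ - frobSq G / (2 * L), ?_⟩
  rintro _ ⟨X, rfl⟩
  have hγX : qlin A0 Ai B0 Bi c0 ci Ξ γ X ≤ qlinMax U A0 Ai B0 Bi c0 ci Ξ X :=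
    le_csSup (hU.bddAbove_image (continuous_qlin A0 Ai B0 Bi c0 ci Ξ X).continuousOn)
      (mem_image_of_mem _ hγ)
  have := neg_frobSq_div_le_minner_add hL G (X - Ξ)
  unfold qlin at hγX
  linarith

end LinearizedMax

theorem stmt_4_general {p k m : ℕ} (U : Set (Fin m → ℝ))
    (hU : IsCompact U) (hUne : U.Nonempty)
    (A0 : Matrix (Fin p) (Fin p) ℝ) (Ai : Fin m → Matrix (Fin p) (Fin p) ℝ)
    (B0 : Matrix (Fin p) (Fin k) ℝ) (Bi : Fin m → Matrix (Fin p) (Fin k) ℝ)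
    (c0 : ℝ) (ci : Fin m → ℝ)
    (hA0 : A0ᵀ = A0) (hAi : ∀ i, (Ai i)ᵀ = Ai i)
    (μ L ε : ℝ) (hμ : 0 < μ) (hμL : μ ≤ L)
    -- μ I ⪯ A(γ) ⪯ L I for all γ ∈ U
    (hbound : ∀ γ ∈ U, (Aaff A0 Ai γ - μ • (1 : Matrix (Fin p) (Fin p) ℝ)).PosSemidef ∧
      (L • (1 : Matrix (Fin p) (Fin p) ℝ) - Aaff A0 Ai γ).PosSemidef)
    (Q : Matrix (Fin p) (Fin k) ℝ → ℝ)
    (hQ : ∀ X, Q X = sSup ((fun γ => qfun A0 Ai B0 Bi c0 ci γ X) '' U))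
    (Ξ : Matrix (Fin p) (Fin k) ℝ)
    (QL : Matrix (Fin p) (Fin k) ℝ → ℝ)
    -- `Q_L(Ξ; X)`, with `∇₂ q(γ,Ξ) = A(γ) Ξ + B(γ)`
    (hQL : ∀ X, QL X =
      sSup ((fun γ => qfun A0 Ai B0 Bi c0 ci γ Ξ +
        minner (Aaff A0 Ai γ * Ξ + Baff B0 Bi γ) (X - Ξ)) '' U) + L / 2 * frobSq (X - Ξ))
    (Xt : Matrix (Fin p) (Fin k) ℝ)
    (happrox : QL Xt ≤ (⨅ X, QL X) + ε) :
    ∀ X, Q Xt + (1 / (2 * (L - μ / 2))) * frobSq ((L - μ / 2) • (Ξ - Xt)) +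
        minner ((L - μ / 2) • (Ξ - Xt)) (X - Ξ) + (μ / 2) / 2 * frobSq (X - Ξ) -
        2 * (L / μ) * ε ≤ Q X := by
  intro X
  have hQL' : ∀ Y, QL Y = qlinMax U A0 Ai B0 Bi c0 ci Ξ Y + L / 2 * frobSq (Y - Ξ) := hQL
  have hbdd := bddBelow_range_qlinMax_add U A0 Ai B0 Bi c0 ci hU hUne (hμ.trans_le hμL) Ξ
  rw [← funext hQL'] at hbdd
  have hopt : ∀ Y, QL Xt ≤ QL Y + ε := fun Y => happrox.trans (by gcongr; exact ciInf_le hbdd Y)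
  refine approx_prox_le_matrix (convexOn_qlinMax U A0 Ai B0 Bi c0 ci hU hUne Ξ) hμ hμL
    (fun Y => ?_) ?_ (fun Y => by simpa only [hQL'] using hopt Y) X
  · rw [hQ]
    exact qlinMax_add_le_sSup U A0 Ai B0 Bi c0 ci hU hUne hA0 hAi (fun γ hγ => (hbound γ hγ).1) Ξ Y
  · rw [hQ]
    exact sSup_le_qlinMax_add U A0 Ai B0 Bi c0 ci hU hUne hA0 hAi (fun γ hγ => (hbound γ hγ).2) Ξ Xt

/-- approximate prox-map inequality. -/
theorem stmt_4 {p k m : ℕ} (U : Set (Fin m → ℝ))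
    (hU : IsCompact U) (hUne : U.Nonempty) (hUconv : Convex ℝ U)
    (A0 : Matrix (Fin p) (Fin p) ℝ) (Ai : Fin m → Matrix (Fin p) (Fin p) ℝ)
    (B0 : Matrix (Fin p) (Fin k) ℝ) (Bi : Fin m → Matrix (Fin p) (Fin k) ℝ)
    (c0 : ℝ) (ci : Fin m → ℝ)
    (hA0 : A0ᵀ = A0) (hAi : ∀ i, (Ai i)ᵀ = Ai i)
    (μ L ε : ℝ) (hμ : 0 < μ) (hμL : μ ≤ L) (hε : 0 ≤ ε)
    -- μ I ⪯ A(γ) ⪯ L I for all γ ∈ U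
    (hbound : ∀ γ ∈ U, (Aaff A0 Ai γ - μ • (1 : Matrix (Fin p) (Fin p) ℝ)).PosSemidef ∧
      (L • (1 : Matrix (Fin p) (Fin p) ℝ) - Aaff A0 Ai γ).PosSemidef)
    (Q : Matrix (Fin p) (Fin k) ℝ → ℝ)
    (hQ : ∀ X, Q X = sSup ((fun γ => qfun A0 Ai B0 Bi c0 ci γ X) '' U))
    (Ξ : Matrix (Fin p) (Fin k) ℝ)
    (QL : Matrix (Fin p) (Fin k) ℝ → ℝ)
    -- `Q_L(Ξ; X)`, with `∇₂ q(γ,Ξ) = A(γ) Ξ + B(γ)`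
    (hQL : ∀ X, QL X =
      sSup ((fun γ => qfun A0 Ai B0 Bi c0 ci γ Ξ +
        minner (Aaff A0 Ai γ * Ξ + Baff B0 Bi γ) (X - Ξ)) '' U) + L / 2 * frobSq (X - Ξ))
    (Xt : Matrix (Fin p) (Fin k) ℝ)
    (happrox : QL Xt ≤ (⨅ X, QL X) + ε) :
    ∀ X, Q Xt + (1 / (2 * (L - μ / 2))) * frobSq ((L - μ / 2) • (Ξ - Xt)) +
        minner ((L - μ / 2) • (Ξ - Xt)) (X - Ξ) + (μ / 2) / 2 * frobSq (X - Ξ) -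
        2 * (L / μ) * ε ≤ Q X :=
  stmt_4_general U hU hUne A0 Ai B0 Bi c0 ci hA0 hAi μ L ε hμ hμL hbound Q hQ Ξ QL hQL Xt happrox
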